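/- Every ordering of the 4-cycle contains every 1-ordering of the 4-path: for any four distinct elements v1,v2,v3,v4 of a linear order (forming the 4-cycle with edge set E = {{v1,v2},{v2,v3},{v3,v4},{v4,v1}}), and any i,l ∈ {1,2,3,4}, there exists a sequence x1,x2,x3,x4 of the four elements (each used exactly once) such that each of {x1,x2},{x2,x3},{x3,x4} belongs to E and x_i is the l-th smallest of the four elements. -/

import Mathlib

/-!
Rotating the cycle `v1 v2 v3 v4` and dropping its closing edge gives a Hamiltonian path of the
cycle that starts at any prescribed vertex. Four distinct elements have the four distinct
ranks `0, 1, 2, 3`, so some vertex `v_j` has rank `l - 1`; the rotation that puts `v_j` in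
position `i` is the required path.
-/

open Finset Function

section Rank

variable {ι α : Type*} [Fintype ι] [LinearOrder α]

theorem card_filter_lt_lt_card_filter_lt {v : ι → α} {a b : ι} (h : v a < v b) :
    #{m | v m < v a} < #{m | v m < v b} :=
  card_lt_card <| (ssubset_iff_of_subset fun m hm => by
    simp only [mem_filter, mem_univ, true_and] at hm ⊢; exact hm.trans h).2 ⟨a, by simpa, by simp⟩

theorem card_filter_lt_lt_card (v : ι → α) (k : ι) : #{m | v m < v k} < Fintype.card ι :=
  card_lt_univ_of_notMem (x := k) (by simp)

theorem exists_card_filter_lt_eq {v : ι → α} (hv : Injective v) {l : ℕ}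
    (hl : l < Fintype.card ι) : ∃ j, #{m | v m < v j} = l := by
  let rank : ι → Fin (Fintype.card ι) := fun k => ⟨_, card_filter_lt_lt_card v k⟩
  have hrank : Injective rank := by
    intro a b hab
    have hab : #{m | v m < v a} = #{m | v m < v b} := congrArg Fin.val hab
    rcases lt_trichotomy (v a) (v b) with h | h | h
    · exact absurd hab (card_filter_lt_lt_card_filter_lt h).ne
    · exact hv h
    · exact absurd hab (card_filter_lt_lt_card_filter_lt h).ne'
  obtain ⟨j, hj⟩ := ((Fintype.bijective_iff_injective_and_card rank).2 ⟨hrank, by simp⟩).2 ⟨l, hl⟩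
  exact ⟨j, congrArg Fin.val hj⟩

end Rank

theorem card_filter_comp_equiv {ι κ : Type*} [Fintype ι] [Fintype κ] (e : ι ≃ κ)
    (p : κ → Prop) [DecidablePred p] : #{k | p (e k)} = #{k | p k} :=
  card_equiv e (by simp)

theorem Fin.mk_succ_eq_mk_add_one {n j : ℕ} [NeZero n] (h : j + 1 < n) :
    (⟨j + 1, h⟩ : Fin n) = ⟨j, by omega⟩ + 1 := by
  ext; rw [Fin.val_add_one_of_lt' (by simpa using h)]

theorem rotate_mem_edges_of_cyclic {α : Type*} {n : ℕ} [NeZero n] {E : Set (Sym2 α)}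
    {v : Fin n → α} (hv : ∀ a, s(v a, v (a + 1)) ∈ E) (t : Fin n) {j : ℕ} (h : j + 1 < n) :
    s(v (⟨j, by omega⟩ + t), v (⟨j + 1, h⟩ + t)) ∈ E := by
  rw [Fin.mk_succ_eq_mk_add_one h, add_right_comm]
  exact hv _

/-- Every ordering of the 4-cycle contains every 1-ordering of the 4-path: for any four
distinct elements `v1, v2, v3, v4` of a linear order, forming the 4-cycle with edge set
`E = {{v1,v2},{v2,v3},{v3,v4},{v4,v1}}`, and any `i, l ∈ {1,2,3,4}`, there is a sequence
`x 0, x 1, x 2, x 3` using each of the four elements exactly once, such that each of the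
pairs `{x 0, x 1}, {x 1, x 2}, {x 2, x 3}` belongs to `E` and the `(i-1)`-indexed vertex is
the `l`-th smallest of the four (exactly `l - 1` of the chosen elements are smaller). -/
theorem cycle4_contains_all_one_orderings_of_P4
    {α : Type*} [LinearOrder α] (v1 v2 v3 v4 : α)
    (h12 : v1 ≠ v2) (h13 : v1 ≠ v3) (h14 : v1 ≠ v4)
    (h23 : v2 ≠ v3) (h24 : v2 ≠ v4) (h34 : v3 ≠ v4)
    (i l : ℕ) (hi' : i ≤ 4) (hl' : l ≤ 4) :
    ∃ x : Fin 4 → α, Function.Injective x ∧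
      (∀ j, x j ∈ ({v1, v2, v3, v4} : Set α)) ∧
      (∀ (j : ℕ) (h : j + 1 < 4),
        s(x ⟨j, by omega⟩, x ⟨j + 1, h⟩) ∈
          ({s(v1, v2), s(v2, v3), s(v3, v4), s(v4, v1)} : Set (Sym2 α))) ∧
      (Finset.univ.filter fun k => x k < x ⟨i - 1, by omega⟩).card = l - 1 := by
  set v : Fin 4 → α := ![v1, v2, v3, v4]
  have hv_inj : Injective v := by
    intro a b hab
    fin_cases a <;> fin_cases b <;> simp_all [v]
  have hv_mem : ∀ a, v a ∈ ({v1, v2, v3, v4} : Set α) := by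
    intro a; fin_cases a <;> simp [v]
  have hv_cyclic : ∀ a : Fin 4, s(v a, v (a + 1)) ∈
      ({s(v1, v2), s(v2, v3), s(v3, v4), s(v4, v1)} : Set (Sym2 α)) := by
    intro a; fin_cases a <;> simp [v]
  obtain ⟨j, hj⟩ := exists_card_filter_lt_eq hv_inj
    (show l - 1 < Fintype.card (Fin 4) by simp only [Fintype.card_fin]; omega)
  set t : Fin 4 := j - ⟨i - 1, by omega⟩
  refine ⟨fun k => v (k + t), hv_inj.comp (add_left_injective t), fun k => hv_mem _,
    fun _ h => rotate_mem_edges_of_cyclic hv_cyclic t h, ?_⟩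
  simp only [t, add_sub_cancel]
  exact (card_filter_comp_equiv (Equiv.addRight t) fun k => v k < v j).trans hj
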